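/- arXiv:1912.10684 — 3 statements merged into one kernel-verified Lean document; each statement's English description precedes it below -/
import Mathlib

section
/- Let R be a commutative ring, N a positive integer, ω ∈ R, and let A and B be N×N matrices over R satisfying A·B = B·A = ω·A and B·B = ω·B. Then for every positive integer m, trace((A+B)^m) = Σ_{l=0}^{m−1} binom(m,l) · ω^l · trace(A^{m−l}) + ω^{m−1} · trace(B). -/
/-- Equation (4.11), algebraic content: if `A·B = B·A = ω·A` and `B·B = ω·B`, then
`tr((A+B)^m) = Σ_{l=0}^{m-1} C(m,l) ω^l tr(A^{m-l}) + ω^{m-1} tr B`. -/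
theorem trace_add_pow_expansion {R : Type*} [CommRing R] {N : ℕ} (hN : 0 < N) (ω : R)
    (A B : Matrix (Fin N) (Fin N) R)
    (hAB : A * B = ω • A) (hBA : B * A = ω • A) (hBB : B * B = ω • B)
    (m : ℕ) (hm : 0 < m) :
    ((A + B) ^ m).trace =
      (∑ l ∈ Finset.range m, (m.choose l : R) * ω ^ l * (A ^ (m - l)).trace)
        + ω ^ (m - 1) * B.trace := by
  have hcomm : Commute A B := hAB.trans hBA.symm
  have hABj : ∀ j, A * B ^ (j+1) = ω^(j+1) • A := by
    intro j; induction j with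
    | zero => simpa using hAB
    | succ j ih =>
        rw [pow_succ B, ← mul_assoc, ih, smul_mul_assoc, hAB, smul_smul, ← pow_succ]
  have hAkBj : ∀ k j, A^(k+1) * B^j = ω^j • A^(k+1) := by
    intro k j
    cases j with
    | zero => simp
    | succ j =>
        rw [pow_succ A k, mul_assoc, hABj, mul_smul_comm, ← pow_succ]
  have hBj : ∀ j, B^(j+1) = ω^j • B := by
    intro j; induction j with
    | zero => simp
    | succ j ih => rw [pow_succ, ih, smul_mul_assoc, hBB, smul_smul, ← pow_succ]
  rw [hcomm.add_pow, Matrix.trace_sum, Finset.sum_range_succ']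
  have hcast : ∀ (X : Matrix (Fin N) (Fin N) R) (c : ℕ),
      (X * (c : Matrix (Fin N) (Fin N) R)).trace = (c : R) * X.trace := by
    intro X c
    rw [← nsmul_eq_mul', Matrix.trace_smul, nsmul_eq_mul]
  congr 1
  · rw [← Finset.sum_range_reflect]
    apply Finset.sum_congr rfl
    intro k hk
    have hk' := Finset.mem_range.mp hk
    have h1 : m - 1 - k = m - (k+1) := by omega
    have e1 : m - (k+1) + 1 = m - k := by omega
    have e2 : m - (m - k) = k := by omega
    obtain ⟨q, hq⟩ : ∃ q, m - k = q + 1 := ⟨m - k - 1, by omega⟩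
    rw [h1, e1, e2, hq, hAkBj, Matrix.smul_mul, Matrix.trace_smul, hcast, ← hq,
      Nat.choose_symm (le_of_lt hk')]
    rw [smul_eq_mul]; ring
  · obtain ⟨p, rfl⟩ : ∃ p, m = p + 1 := ⟨m - 1, by omega⟩
    simp [hBj p, hcast, Matrix.trace_smul]
end

section
/- Let R be a commutative ring, N a positive integer, ω ∈ R, and let A and B be N×N matrices over R satisfying A·B = B·A = ω·A and B·B = ω·B. Then for every positive integer m, trace(A^m) = Σ_{l=0}^{m−1} (−1)^l · binom(m,l) · ω^l · trace((A+B)^{m−l}) + (−1)^m · ω^{m−1} · trace(B). -/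
/-- Equation (4.12), algebraic content: if `A·B = B·A = ω·A` and `B·B = ω·B`, then
`tr(A^m) = Σ_{l=0}^{m-1} (-1)^l C(m,l) ω^l tr((A+B)^{m-l}) + (-1)^m ω^{m-1} tr B`. -/
theorem trace_pow_expansion {R : Type*} [CommRing R] {N : ℕ} (hN : 0 < N) (ω : R)
    (A B : Matrix (Fin N) (Fin N) R)
    (hAB : A * B = ω • A) (hBA : B * A = ω • A) (hBB : B * B = ω • B)
    (m : ℕ) (hm : 0 < m) :
    (A ^ m).trace =
      (∑ l ∈ Finset.range m,
        (-1 : R) ^ l * (m.choose l : R) * ω ^ l * ((A + B) ^ (m - l)).trace)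
        + (-1 : R) ^ m * ω ^ (m - 1) * B.trace := by
  set W := A + B with hW
  have hWB : W * B = ω • W := by
    rw [hW, add_mul, hAB, hBB, ← smul_add]
  have hBW : B * W = ω • W := by
    rw [hW, mul_add, hBA, hBB, ← smul_add]
  have hc : Commute W (-B) := by
    simp only [Commute, SemiconjBy, mul_neg, neg_mul, hWB, hBW]
  have hA : A = W + (-B) := by rw [hW]; abel
  have hWBl : ∀ k l : ℕ, W ^ (k + 1) * B ^ l = ω ^ l • W ^ (k + 1) := by
    intro k l
    induction l with
    | zero => simp
    | succ l ih =>
      rw [pow_succ B, ← mul_assoc, ih, smul_mul_assoc, pow_succ W, mul_assoc, hWB,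
        mul_smul_comm, ← pow_succ W, smul_smul, pow_succ ω, mul_comm]
  have hBpow : ∀ k : ℕ, B ^ (k + 1) = ω ^ k • B := by
    intro k
    induction k with
    | zero => simp
    | succ k ih =>
      rw [pow_succ, ih, smul_mul_assoc, hBB, smul_smul, pow_succ, mul_comm]
  have key : A ^ m =
      (∑ l ∈ Finset.range m,
        ((-1 : R) ^ l * (m.choose l : R) * ω ^ l) • W ^ (m - l))
        + ((-1 : R) ^ m * ω ^ (m - 1)) • B := by
    rw [hA, hc.add_pow, Finset.sum_range_succ']
    congr 1
    · rw [← Finset.sum_range_reflect]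
      apply Finset.sum_congr rfl
      intro j hj
      have hj' := Finset.mem_range.mp hj
      have h1 : m - 1 - j + 1 = m - j := by omega
      have h2 : m - (m - j) = j := by omega
      rw [h1, h2, Nat.choose_symm (le_of_lt hj')]
      obtain ⟨p, hp⟩ : ∃ p, m - j = p + 1 := ⟨m - j - 1, by omega⟩
      rw [hp, show -B = (-1 : R) • B from by simp, smul_pow, mul_smul_comm, hWBl,
        smul_mul_assoc, smul_mul_assoc, ← nsmul_eq_mul', ← Nat.cast_smul_eq_nsmul R,
        smul_smul, smul_smul]
      congr 1
      ring
    · obtain ⟨k, rfl⟩ : ∃ k, m = k + 1 := ⟨m - 1, by omega⟩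
      rw [show -B = (-1 : R) • B from by simp, smul_pow]
      simp only [pow_zero, one_mul, Nat.sub_zero, Nat.choose_zero_right, Nat.cast_one,
        mul_one, Nat.add_sub_cancel, hBpow, smul_smul]
  rw [key]
  simp [Matrix.trace_add, Matrix.trace_sum, Matrix.trace_smul, smul_eq_mul, mul_assoc]
end

section
/- Let R be a commutative ℚ-algebra, N a positive integer, n a natural number, ω ∈ R, and let A and B be N×N matrices over R satisfying A·B = B·A = ω·A, B·B = ω·B, trace(B) = (n+2)·ω, and trace(A) = −(n+2)·ω. Then trace(A+B) = 0, and for every integer m ≥ 2, trace((A+B)^m) = Σ_{l=0}^{m−2} (−1)^l · binom(m,l) · (n+2)^{−l} · (trace A)^l · trace(A^{m−l}) + (−1)^{m−1} · (m−1) · (n+2)^{−(m−1)} · (trace A)^m, where (n+2)^{−1} denotes the inverse of n+2 in ℚ acting on R. -/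
/-- Burns--Epstein's proposition (Section 4.2), algebraic content: with
`A·B = B·A = ω·A`, `B·B = ω·B`, `tr B = (n+2)ω` and `tr A = -(n+2)ω`, one has
`tr(A+B) = 0` and for `m ≥ 2`,
`tr((A+B)^m) = Σ_{l=0}^{m-2} (-1)^l C(m,l) (n+2)^{-l} (tr A)^l tr(A^{m-l})
  + (-1)^{m-1}(m-1)(n+2)^{-(m-1)} (tr A)^m`. -/
theorem trace_renormalized_expansion {R : Type*} [CommRing R] [Algebra ℚ R]
    {N : ℕ} (hN : 0 < N) (n : ℕ) (ω : R)
    (A B : Matrix (Fin N) (Fin N) R)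
    (hAB : A * B = ω • A) (hBA : B * A = ω • A) (hBB : B * B = ω • B)
    (htrB : B.trace = ((n : R) + 2) * ω) (htrA : A.trace = -(((n : R) + 2) * ω)) :
    (A + B).trace = 0 ∧
      ∀ m : ℕ, 2 ≤ m →
        ((A + B) ^ m).trace =
          (∑ l ∈ Finset.range (m - 1),
            (-1 : R) ^ l * (m.choose l : R) *
              ((((n : ℚ) + 2)⁻¹ ^ l) • (A.trace ^ l * (A ^ (m - l)).trace)))
            + (-1 : R) ^ (m - 1) * ((m - 1 : ℕ) : R) *
              ((((n : ℚ) + 2)⁻¹ ^ (m - 1)) • A.trace ^ m) := by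
  have hc : (algebraMap ℚ R) ((n : ℚ) + 2) = (n : R) + 2 := by
    rw [map_add, map_natCast, map_ofNat]
  have hq : ((n : ℚ) + 2) ≠ 0 := by positivity
  have qsmul : ∀ (l : ℕ) (x : R),
      (((n : ℚ) + 2)⁻¹ ^ l) • (((n : R) + 2) ^ l * x) = x := by
    intro l x
    rw [Algebra.smul_def, ← hc, ← map_pow, ← mul_assoc, ← map_mul,
      ← mul_pow, inv_mul_cancel₀ hq, one_pow, map_one, one_mul]
  have haux : ∀ (c o x : R) (l : ℕ), (-(c * o)) ^ l * x
      = c ^ l * ((-1 : R) ^ l * (o ^ l * x)) := by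
    intro c o x l
    rw [neg_pow, mul_pow]
    ring
  have key1 : ∀ (l : ℕ) (x : R),
      (((n : ℚ) + 2)⁻¹ ^ l) • ((-(((n : R) + 2) * ω)) ^ l * x)
        = (-1 : R) ^ l * (ω ^ l * x) := by
    intro l x
    rw [haux, qsmul]
  have hBpow : ∀ j : ℕ, B ^ (j + 1) = ω ^ j • B := by
    intro j
    induction j with
    | zero => simp
    | succ j ih =>
      rw [pow_succ, ih, Matrix.smul_mul, hBB, smul_smul, pow_succ]
  have hApB : ∀ k : ℕ, A ^ (k + 1) * B = ω • A ^ (k + 1) := by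
    intro k
    rw [pow_succ, mul_assoc, hAB, Matrix.mul_smul, ← pow_succ]
  have hApBp : ∀ (k j : ℕ), A ^ (k + 1) * B ^ j = ω ^ j • A ^ (k + 1) := by
    intro k j
    induction j with
    | zero => simp
    | succ j ih =>
      rw [pow_succ B j, ← mul_assoc, ih, Matrix.smul_mul, hApB, smul_smul, ← pow_succ]
  have trc : ∀ (M : Matrix (Fin N) (Fin N) R) (c : ℕ),
      (M * ((c : ℕ) : Matrix (Fin N) (Fin N) R)).trace = (c : R) * M.trace := by
    intro M c
    rw [Matrix.trace_mul_comm, ← nsmul_eq_mul, Matrix.trace_smul, nsmul_eq_mul]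
  have hcomm : Commute A B := hAB.trans hBA.symm
  constructor
  · rw [Matrix.trace_add, htrA, htrB]; ring
  intro m hm
  obtain ⟨p, rfl⟩ : ∃ p, m = p + 2 := ⟨m - 2, by omega⟩
  have hsub1 : p + 2 - 1 = p + 1 := by omega
  rw [hcomm.add_pow, Matrix.trace_sum, hsub1]
  rw [show p + 2 + 1 = p + 1 + 1 + 1 from rfl, Finset.sum_range_succ',
    Finset.sum_range_succ']
  rw [← Finset.sum_range_reflect (fun l => (-1 : R) ^ l * (((p + 2).choose l : ℕ) : R) *
      ((((n : ℚ) + 2)⁻¹ ^ l) • (A.trace ^ l * (A ^ (p + 2 - l)).trace))) (p + 1)]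
  have hterm : ∀ i ∈ Finset.range (p + 1),
      (A ^ (i + 1 + 1) * B ^ (p + 2 - (i + 1 + 1)) *
          (((p + 2).choose (i + 1 + 1) : ℕ) : Matrix (Fin N) (Fin N) R)).trace
        = (-1 : R) ^ (p + 1 - 1 - i) * (((p + 2).choose (p + 1 - 1 - i) : ℕ) : R) *
            ((((n : ℚ) + 2)⁻¹ ^ (p + 1 - 1 - i)) •
              (A.trace ^ (p + 1 - 1 - i) * (A ^ (p + 2 - (p + 1 - 1 - i))).trace)) := by
    intro i hi
    rw [Finset.mem_range] at hi
    have e1 : p + 1 - 1 - i = p - i := by omega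
    have e2 : p + 2 - (i + 1 + 1) = p - i := by omega
    have e3 : p + 2 - (p - i) = i + 2 := by omega
    have e4 : (p + 2).choose (p - i) = (p + 2).choose (i + 2) := by
      rw [show p - i = p + 2 - (i + 2) from by omega, Nat.choose_symm (by omega)]
    have e5 : i + 1 + 1 = i + 2 := rfl
    rw [e1, e2, e3, e4, e5, htrA, key1, trc, hApBp, Matrix.trace_smul, smul_eq_mul]
    have hsq : (-1 : R) ^ (p - i) * ((-1 : R) ^ (p - i)) = 1 := by
      rw [← mul_pow]; norm_num
    linear_combination (-((((p + 2).choose (i + 2) : ℕ) : R) *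
      (ω ^ (p - i) * (A ^ (i + 2)).trace))) * hsq
  rw [Finset.sum_congr rfl hterm]
  have g0 : (A ^ 0 * B ^ (p + 2 - 0) *
      (((p + 2).choose 0 : ℕ) : Matrix (Fin N) (Fin N) R)).trace
        = ((n : R) + 2) * (ω ^ (p + 1) * ω) := by
    rw [pow_zero, Matrix.one_mul, trc, Nat.choose_zero_right,
      show p + 2 - 0 = p + 1 + 1 from rfl, hBpow, Matrix.trace_smul, smul_eq_mul, htrB]
    push_cast
    ring
  have g1 : (A ^ (0 + 1) * B ^ (p + 2 - (0 + 1)) *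
      (((p + 2).choose (0 + 1) : ℕ) : Matrix (Fin N) (Fin N) R)).trace
        = -(((p : R) + 2) * (((n : R) + 2) * (ω ^ (p + 1) * ω))) := by
    rw [trc, show p + 2 - (0 + 1) = p + 1 from rfl, hApBp, Matrix.trace_smul,
      smul_eq_mul, pow_one, htrA, Nat.choose_one_right]
    push_cast
    ring
  have glast : (-1 : R) ^ (p + 1) * (((p + 1 : ℕ)) : R) *
      ((((n : ℚ) + 2)⁻¹ ^ (p + 1)) • A.trace ^ (p + 2))
        = -(((p : R) + 1) * (((n : R) + 2) * (ω ^ (p + 1) * ω))) := by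
    rw [htrA, show (-(((n : R) + 2) * ω)) ^ (p + 2)
        = (-(((n : R) + 2) * ω)) ^ (p + 1) * (-(((n : R) + 2) * ω)) from pow_succ _ _,
      haux, qsmul]
    have hsq : (-1 : R) ^ (p + 1) * ((-1 : R) ^ (p + 1)) = 1 := by
      rw [← mul_pow]; norm_num
    push_cast
    linear_combination (((p : R) + 1) *
      (ω ^ (p + 1) * (-(((n : R) + 2) * ω)))) * hsq
  rw [g0, g1, glast]
  ring
end
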